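/- arXiv:2503.05480 — 2 statements merged into one kernel-verified Lean document; each statement's English description precedes it below -/
import Mathlib

section
/- Let s₁, s₂ be points of ℂ (identified with the plane), let c > 0, σ₁ > 0, σ₂ > 0, T ∈ ℝ and θ_r ∈ ℝ. Then the pointwise product z ↦ exp(−(‖z − s₁‖/c − T)²/(2σ₁²)) · exp(−(arg(z − s₂) − θ_r)²/(2σ₂²)) is integrable over ℂ with respect to the Lebesgue (volume) measure, and its integral is strictly positive. (Hence, although the AoA density alone is not normalizable, the combined ToA–AoA location PDF admits a well-defined normalization constant C_{N,R} > 0, so the angular information is preserved in the renormalized product.) -/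
open MeasureTheory

lemma gaussian_norm_integrable {b : ℝ} (hb : 0 < b) :
    Integrable (fun z : ℂ => Real.exp (-b * ‖z‖ ^ 2)) (volume : Measure ℂ) := by
  have h := GaussianFourier.integrable_cexp_neg_mul_sq_norm_add (V := ℂ)
      (b := (b : ℂ)) (by simpa using hb) 0 0
  have := h.norm
  simp only [zero_mul, add_zero] at this
  convert this using 2 with z
  rw [show (-(b:ℂ) * (‖z‖:ℂ) ^ 2) = ((-b * ‖z‖ ^ 2 : ℝ) : ℂ) by push_cast; ring]
  simp only [Complex.norm_exp, Complex.ofReal_re]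

/-- The pointwise product of a ToA density and an AoA density over the plane is
integrable with a strictly positive integral: the combined ToA–AoA location PDF
admits a well-defined normalization constant `C_{N,R} > 0`. -/
theorem toa_aoa_product_integrable_and_pos (s₁ s₂ : ℂ) (c σ₁ σ₂ T θr : ℝ)
    (hc : 0 < c) (hσ₁ : 0 < σ₁) (hσ₂ : 0 < σ₂) :
    Integrable
      (fun z : ℂ =>
        Real.exp (-(‖z - s₁‖ / c - T) ^ 2 / (2 * σ₁ ^ 2)) *
          Real.exp (-((z - s₂).arg - θr) ^ 2 / (2 * σ₂ ^ 2)))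
      (volume : Measure ℂ) ∧
    0 < ∫ z : ℂ,
        Real.exp (-(‖z - s₁‖ / c - T) ^ 2 / (2 * σ₁ ^ 2)) *
          Real.exp (-((z - s₂).arg - θr) ^ 2 / (2 * σ₂ ^ 2)) := by
  set b : ℝ := 1 / (4 * c ^ 2 * σ₁ ^ 2) with hb_def
  have hb : 0 < b := by positivity
  -- the majorant
  have hg : Integrable (fun z : ℂ =>
      Real.exp (T ^ 2 / (2 * σ₁ ^ 2)) * Real.exp (-b * ‖z - s₁‖ ^ 2)) volume := by
    have := ((gaussian_norm_integrable hb).comp_sub_right s₁)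
    exact this.const_mul _
  -- measurability
  have hmeas : AEStronglyMeasurable
      (fun z : ℂ =>
        Real.exp (-(‖z - s₁‖ / c - T) ^ 2 / (2 * σ₁ ^ 2)) *
          Real.exp (-((z - s₂).arg - θr) ^ 2 / (2 * σ₂ ^ 2))) volume := by
    have m1 : Measurable fun z : ℂ => Real.exp (-(‖z - s₁‖ / c - T) ^ 2 / (2 * σ₁ ^ 2)) := by
      fun_prop
    have m2 : Measurable fun z : ℂ => Real.exp (-((z - s₂).arg - θr) ^ 2 / (2 * σ₂ ^ 2)) := by
      have := Complex.measurable_arg.comp (measurable_id.sub_const s₂)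
      fun_prop
    exact (m1.mul m2).aestronglyMeasurable
  have hint : Integrable
      (fun z : ℂ =>
        Real.exp (-(‖z - s₁‖ / c - T) ^ 2 / (2 * σ₁ ^ 2)) *
          Real.exp (-((z - s₂).arg - θr) ^ 2 / (2 * σ₂ ^ 2))) volume := by
    refine hg.mono' hmeas (Filter.Eventually.of_forall fun z => ?_)
    rw [Real.norm_eq_abs, abs_of_pos (by positivity)]
    have h2 : Real.exp (-((z - s₂).arg - θr) ^ 2 / (2 * σ₂ ^ 2)) ≤ 1 := by
      rw [show (1 : ℝ) = Real.exp 0 by simp]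
      apply Real.exp_le_exp.mpr
      have : 0 ≤ ((z - s₂).arg - θr) ^ 2 := sq_nonneg _
      rw [div_le_iff₀ (by positivity)]
      nlinarith
    have h1 : Real.exp (-(‖z - s₁‖ / c - T) ^ 2 / (2 * σ₁ ^ 2)) ≤
        Real.exp (T ^ 2 / (2 * σ₁ ^ 2)) * Real.exp (-b * ‖z - s₁‖ ^ 2) := by
      rw [← Real.exp_add]
      apply Real.exp_le_exp.mpr
      rw [hb_def]
      have hr : 0 ≤ ‖z - s₁‖ := norm_nonneg _
      have hc2 : (0:ℝ) < c ^ 2 := by positivity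
      have hs2 : (0:ℝ) < σ₁ ^ 2 := by positivity
      rw [div_le_iff₀ (by positivity : (0:ℝ) < 2 * σ₁ ^ 2)]
      have hred : (T ^ 2 / (2 * σ₁ ^ 2) + -(1 / (4 * c ^ 2 * σ₁ ^ 2)) * ‖z - s₁‖ ^ 2) *
          (2 * σ₁ ^ 2) = T ^ 2 - ‖z - s₁‖ ^ 2 / (2 * c ^ 2) := by
        field_simp; ring
      rw [hred]
      have hu : ‖z - s₁‖ ^ 2 / (2 * c ^ 2) * (2 * c ^ 2) = ‖z - s₁‖ ^ 2 := by field_simp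
      have hv : (‖z - s₁‖ / c - T) ^ 2 * c ^ 2 = (‖z - s₁‖ - T * c) ^ 2 := by
        field_simp
      nlinarith [sq_nonneg (‖z - s₁‖ - 2 * T * c), hu, hv, hc2]
    calc Real.exp (-(‖z - s₁‖ / c - T) ^ 2 / (2 * σ₁ ^ 2)) *
          Real.exp (-((z - s₂).arg - θr) ^ 2 / (2 * σ₂ ^ 2))
        ≤ Real.exp (-(‖z - s₁‖ / c - T) ^ 2 / (2 * σ₁ ^ 2)) * 1 :=
          mul_le_mul_of_nonneg_left h2 (Real.exp_pos _).le
      _ = Real.exp (-(‖z - s₁‖ / c - T) ^ 2 / (2 * σ₁ ^ 2)) := mul_one _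
      _ ≤ _ := h1
  refine ⟨hint, ?_⟩
  rw [integral_pos_iff_support_of_nonneg (fun z => by positivity) hint]
  have : (Function.support fun z : ℂ =>
      Real.exp (-(‖z - s₁‖ / c - T) ^ 2 / (2 * σ₁ ^ 2)) *
        Real.exp (-((z - s₂).arg - θr) ^ 2 / (2 * σ₂ ^ 2))) = Set.univ := by
    ext z; simp [Function.support, (Real.exp_pos _).ne', ne_of_gt, mul_pos (Real.exp_pos _) (Real.exp_pos _)]
  rw [this]
  exact isOpen_univ.measure_pos volume Set.univ_nonempty
end

section
/- Let u, v be unit vectors in EuclideanSpace ℝ (Fin 2) and let a, b > 0. Then the infimum, over all unit vectors w, of a·⟪u, w⟫² + b·⟪v, w⟫² equals min(a, b) if and only if ⟪u, v⟫ = 0. (The worst-direction information of the pair of sensors is maximized exactly when their information directions are orthogonal.) -/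
open scoped RealInnerProductSpace

private lemma inner_two (x y : EuclideanSpace ℝ (Fin 2)) :
    ⟪x, y⟫ = x 0 * y 0 + x 1 * y 1 := by
  simp [PiLp.inner_apply, Fin.sum_univ_two, RCLike.inner_apply]
  ring

/-- Parseval for an orthonormal pair in the plane. -/
private lemma parseval2 (p q w : EuclideanSpace ℝ (Fin 2)) (hp : ‖p‖ = 1) (hq : ‖q‖ = 1)
    (hpq : ⟪p, q⟫ = 0) : ⟪p, w⟫ ^ 2 + ⟪q, w⟫ ^ 2 = ‖w‖ ^ 2 := by
  have hp' : p 0 * p 0 + p 1 * p 1 = 1 := by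
    have h := real_inner_self_eq_norm_sq p
    rw [inner_two, hp] at h; linarith [h]
  have hq' : q 0 * q 0 + q 1 * q 1 = 1 := by
    have h := real_inner_self_eq_norm_sq q
    rw [inner_two, hq] at h; linarith [h]
  have hpq' : p 0 * q 0 + p 1 * q 1 = 0 := by rw [inner_two] at hpq; linarith [hpq]
  have hw : ‖w‖ ^ 2 = w 0 * w 0 + w 1 * w 1 := by
    rw [← real_inner_self_eq_norm_sq, inner_two]
  set D := p 0 * q 1 - p 1 * q 0 with hDdef
  have hD : D ^ 2 = 1 := by
    rw [hDdef]
    linear_combination (q 0 ^ 2 + q 1 ^ 2) * hp' + hq' - (p 0 * q 0 + p 1 * q 1) * hpq'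
  have hq0 : q 0 = -(p 1 * D) := by rw [hDdef]; linear_combination p 0 * hpq' - q 0 * hp'
  have hq1 : q 1 = p 0 * D := by rw [hDdef]; linear_combination p 1 * hpq' - q 1 * hp'
  rw [inner_two, inner_two, hw, hq0, hq1]
  linear_combination (p 0 * w 1 - p 1 * w 0) ^ 2 * hD + (w 0 ^ 2 + w 1 ^ 2) * hp'

private lemma exists_perp (z : EuclideanSpace ℝ (Fin 2)) (hz : ‖z‖ = 1) :
    ∃ z' : EuclideanSpace ℝ (Fin 2), ‖z'‖ = 1 ∧ ⟪z, z'⟫ = 0 := by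
  refine ⟨(EuclideanSpace.equiv (Fin 2) ℝ).symm ![z 1, -z 0], ?_, ?_⟩
  · have hz' : z 0 * z 0 + z 1 * z 1 = 1 := by
      have h := real_inner_self_eq_norm_sq z
      rw [inner_two, hz] at h; linarith [h]
    have h2 : ‖(EuclideanSpace.equiv (Fin 2) ℝ).symm ![z 1, -z 0]‖ ^ 2 = 1 := by
      rw [← real_inner_self_eq_norm_sq, inner_two]
      show z 1 * z 1 + -z 0 * -z 0 = 1
      linarith [hz']
    nlinarith [norm_nonneg ((EuclideanSpace.equiv (Fin 2) ℝ).symm ![z 1, -z 0]), h2]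
  · rw [inner_two]
    show z 0 * z 1 + z 1 * -z 0 = 0
    ring

/-- For unit vectors `u, v` in the Euclidean plane and weights `a, b > 0`, the
infimum over unit vectors `w` of `a⟪u,w⟫² + b⟪v,w⟫²` equals `min a b` if and
only if `u` and `v` are orthogonal. -/
theorem min_eigenvalue_eq_min_iff_orthogonal (u v : EuclideanSpace ℝ (Fin 2))
    (hu : ‖u‖ = 1) (hv : ‖v‖ = 1) (a b : ℝ) (ha : 0 < a) (hb : 0 < b) :
    sInf {r : ℝ | ∃ w : EuclideanSpace ℝ (Fin 2), ‖w‖ = 1 ∧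
        r = a * ⟪u, w⟫ ^ 2 + b * ⟪v, w⟫ ^ 2} = min a b ↔ ⟪u, v⟫ = 0 := by
  set S := {r : ℝ | ∃ w : EuclideanSpace ℝ (Fin 2), ‖w‖ = 1 ∧
      r = a * ⟪u, w⟫ ^ 2 + b * ⟪v, w⟫ ^ 2} with hSdef
  have hbdd : BddBelow S := by
    refine ⟨0, fun r hr => ?_⟩
    obtain ⟨w, hw, rfl⟩ := hr
    positivity
  have hne : S.Nonempty := ⟨a * ⟪u, u⟫ ^ 2 + b * ⟪v, u⟫ ^ 2, u, hu, rfl⟩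
  constructor
  · intro h
    by_contra hc
    have hc2 : 0 < ⟪u, v⟫ ^ 2 := lt_of_le_of_ne (sq_nonneg _) (Ne.symm (pow_ne_zero 2 hc))
    obtain ⟨w1, hw1, hw1v⟩ := exists_perp v hv
    obtain ⟨w2, hw2, hw2u⟩ := exists_perp u hu
    have hP1 : ⟪u, w1⟫ ^ 2 = 1 - ⟪u, v⟫ ^ 2 := by
      have h1 := parseval2 v w1 u hv hw1 hw1v
      have e1 : ⟪v, u⟫ = ⟪u, v⟫ := by rw [real_inner_comm]
      have e2 : ⟪w1, u⟫ = ⟪u, w1⟫ := by rw [real_inner_comm]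
      rw [hu, e1, e2] at h1
      nlinarith [h1]
    have hP2 : ⟪v, w2⟫ ^ 2 = 1 - ⟪u, v⟫ ^ 2 := by
      have h2 := parseval2 u w2 v hu hw2 hw2u
      have e3 : ⟪w2, v⟫ = ⟪v, w2⟫ := by rw [real_inner_comm]
      rw [hv, e3] at h2
      nlinarith [h2]
    have hvw1 : ⟪v, w1⟫ = 0 := hw1v
    have huw2 : ⟪u, w2⟫ = 0 := hw2u
    have h1 : sInf S ≤ a * (1 - ⟪u, v⟫ ^ 2) := by
      have : a * (1 - ⟪u, v⟫ ^ 2) ∈ S := ⟨w1, hw1, by rw [hP1, hvw1]; ring⟩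
      exact csInf_le hbdd this
    have h2 : sInf S ≤ b * (1 - ⟪u, v⟫ ^ 2) := by
      have : b * (1 - ⟪u, v⟫ ^ 2) ∈ S := ⟨w2, hw2, by rw [hP2, huw2]; ring⟩
      exact csInf_le hbdd this
    rcases le_total a b with hab | hab
    · rw [h, min_eq_left hab] at h1
      nlinarith
    · rw [h, min_eq_right hab] at h2
      nlinarith
  · intro hc
    apply le_antisymm
    · have huu : ⟪u, u⟫ = 1 := by rw [real_inner_self_eq_norm_sq, hu]; norm_num
      have hvv : ⟪v, v⟫ = 1 := by rw [real_inner_self_eq_norm_sq, hv]; norm_num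
      have hvu : ⟪v, u⟫ = 0 := by rw [real_inner_comm]; exact hc
      refine le_min (csInf_le hbdd ⟨u, hu, ?_⟩) (csInf_le hbdd ⟨v, hv, ?_⟩)
      · rw [huu, hvu]; ring
      · rw [hc, hvv]; ring
    · apply le_csInf hne
      rintro r ⟨w, hw, rfl⟩
      have hP := parseval2 u v w hu hv hc
      rw [hw] at hP
      rcases le_total a b with hab | hab
      · rw [min_eq_left hab]
        nlinarith [sq_nonneg ⟪u, w⟫, sq_nonneg ⟪v, w⟫]
      · rw [min_eq_right hab]
        nlinarith [sq_nonneg ⟪u, w⟫, sq_nonneg ⟪v, w⟫]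
end
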